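/- arXiv:2509.01887 — 2 statements merged into one kernel-verified Lean document; each statement's English description precedes it below -/
import Mathlib

section
/- For every DMG G = (V, D, B) there exists an adjacent separating system on (V, D) with at most 2·χ_s(G^u) elements, where χ_s(G^u) is the strong edge chromatic number of the directed skeleton G^u. -/
universe u

/-- A directed mixed graph (DMG): directed edges `D` (no self-loops) and
bidirected edges `B` (symmetric, no self-loops). -/
structure DMG (V : Type u) where
  D : V → V → Prop
  B : V → V → Prop
  D_irrefl : ∀ x, ¬ D x x
  B_symm : ∀ x y, B x y → B y x
  B_irrefl : ∀ x, ¬ B x x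

namespace DMG

variable {V : Type u}

/-- `x` is an ancestor of `y` (reflexive-transitive closure of `D`). -/
def anc (G : DMG V) (x y : V) : Prop := Relation.ReflTransGen G.D x y

/-- ancestors of a set of vertices -/
def ancSet (G : DMG V) (W : Set V) : Set V := {x | ∃ y ∈ W, G.anc x y}

/-- the strongly connected component of `x` -/
def scc (G : DMG V) (x : V) : Set V := {y | G.anc x y ∧ G.anc y x}

/-- parents of a vertex -/
def pa (G : DMG V) (x : V) : Set V := {y | G.D y x}

/-- parents of a set of vertices -/
def paSet (G : DMG V) (W : Set V) : Set V := {y | ∃ x ∈ W, G.D y x}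

/-- non-adjacent bidirected edges -/
def BN (G : DMG V) : V → V → Prop := fun x y => G.B x y ∧ ¬ G.D x y ∧ ¬ G.D y x

/-- the intervened graph `G_Ī` -/
def intervene (G : DMG V) (I : Set V) : DMG V where
  D a b := G.D a b ∧ b ∉ I
  B a b := G.B a b ∧ a ∉ I ∧ b ∉ I
  D_irrefl := fun x h => G.D_irrefl x h.1
  B_symm := fun x y h => ⟨G.B_symm x y h.1, h.2.2, h.2.1⟩
  B_irrefl := fun x h => G.B_irrefl x h.1

/-- the directed skeleton `G^u` -/
def skel (G : DMG V) : SimpleGraph V where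
  Adj x y := x ≠ y ∧ (G.D x y ∨ G.D y x)
  symm := ⟨fun _ _ h => ⟨h.1.symm, h.2.elim Or.inr Or.inl⟩⟩
  loopless := ⟨fun _ h => h.1 rfl⟩

/-- the undirected component graph `G^{uc}` -/
def ucomp (G : DMG V) : SimpleGraph V where
  Adj x y := x ≠ y ∧ ¬ G.D x y ∧ ¬ G.D y x
  symm := ⟨fun _ _ h => ⟨h.1.symm, h.2.2, h.2.1⟩⟩
  loopless := ⟨fun _ h => h.1 rfl⟩

/-- `S` is an SCC of `G` -/
def isSCC (G : DMG V) (S : Set V) : Prop := ∃ x, S = G.scc x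

/-- `S` is an SCC-ancestor of the distinct SCC `S'` -/
def sccAncestor (G : DMG V) (S S' : Set V) : Prop :=
  S ≠ S' ∧ ∃ x ∈ S, ∃ y ∈ S', G.anc x y

/-- `S` is a `k`-order SCC-ancestor of `S'`: there is a directed path from a
vertex of `S` to a vertex of `S'` passing through at most `k-1` SCCs other than
`S` and `S'`. -/
def kOrderSCCAnc (G : DMG V) (k : ℕ) (S S' : Set V) : Prop :=
  S ≠ S' ∧ ∃ p : List V, p ≠ [] ∧ p.Chain' G.D ∧
    (∃ x ∈ S, p.head? = some x) ∧ (∃ y ∈ S', p.getLast? = some y) ∧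
    ({C : Set V | ∃ z ∈ p, z ∉ S ∧ z ∉ S' ∧ C = G.scc z}).ncard ≤ k - 1

/-- `G` has SCC-Anc length `l` : `l` is the least integer such that every
SCC-ancestor of any SCC is an `l`-order SCC-ancestor. -/
def sccAncLength (G : DMG V) (l : ℕ) : Prop :=
  IsLeast {m | ∀ S S' : Set V, G.isSCC S → G.isSCC S' →
    G.sccAncestor S' S → G.kOrderSCCAnc m S' S} l

/-- membership in the first layer `𝒯_1` of the SCC-Anc partition -/
def sccLayer0 (G : DMG V) (S : Set V) : Prop :=
  G.isSCC S ∧ ¬ ∃ S' : Set V, G.isSCC S' ∧ G.sccAncestor S' S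

/-- `m` is the least order at which `S'` is an SCC-ancestor of `S` -/
def minOrd (G : DMG V) (S' S : Set V) (m : ℕ) : Prop :=
  IsLeast {j | G.kOrderSCCAnc j S' S} m

/-- membership in the layer `𝒯_{i+1}` of the SCC-Anc partition (0-indexed `i`):
for `i ≥ 1`, `S ∈ 𝒯_{i+1}` iff some SCC of `𝒯_1` is an `i`-order SCC-ancestor
of `S` and no SCC of `𝒯_1` is only an `r`-order SCC-ancestor of `S` for `r > i`,
i.e. `i` is the largest minimal order of a `𝒯_1` SCC-ancestor of `S`. -/
def sccLayer (G : DMG V) (i : ℕ) (S : Set V) : Prop :=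
  if i = 0 then G.sccLayer0 S
  else G.isSCC S ∧ IsGreatest {m | ∃ S' : Set V, G.sccLayer0 S' ∧ G.minOrd S' S m} i

/-- `T_{k+1}` (0-indexed `k`): the set of vertices in layers `𝒯_1, …, 𝒯_k` -/
def TUnion (G : DMG V) (k : ℕ) : Set V :=
  {v | ∃ i < k, ∃ S : Set V, G.sccLayer i S ∧ v ∈ S}

/-- SCC-Anc separating system on `(V, 𝕋^G)` (layers 0-indexed by `0,…,l`) -/
def SCCAncSepSystem (G : DMG V) (l : ℕ) (𝓘 : Set (Set V)) : Prop :=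
  ∀ k ≤ l, ∀ S : Set V, G.sccLayer k S → ∀ X ∈ S,
    ∃ I ∈ 𝓘, (G.TUnion k ∪ S) \ {X} ⊆ I ∧ X ∉ I

/-- `G` with the directed edge `(F, S)` removed -/
def removeDir (G : DMG V) (F S : V) : DMG V where
  D a b := G.D a b ∧ ¬(a = F ∧ b = S)
  B := G.B
  D_irrefl := fun x h => G.D_irrefl x h.1
  B_symm := G.B_symm
  B_irrefl := fun x h => G.B_irrefl x h

/-- `G` with the bidirected edge `{S, R}` removed -/
def removeBi (G : DMG V) (S R : V) : DMG V where
  D := G.D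
  B a b := G.B a b ∧ ¬((a = S ∧ b = R) ∨ (a = R ∧ b = S))
  D_irrefl := G.D_irrefl
  B_symm := by
    intro x y h
    refine ⟨G.B_symm x y h.1, ?_⟩
    rintro (⟨h1, h2⟩ | ⟨h1, h2⟩)
    · exact h.2 (Or.inr ⟨h2, h1⟩)
    · exact h.2 (Or.inl ⟨h2, h1⟩)
  B_irrefl := fun x h => G.B_irrefl x h.1

end DMG

/-- kinds of edges along a mixed path: forward directed, backward directed, bidirected -/
inductive EKind | fwd | bwd | bi

/-- a mixed path skeleton: `k ≥ 1` steps, vertices `Z 0, …, Z k`, edges `E 0, …, E (k-1)`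
(step `i` joins `Z i` and `Z (i+1)`). -/
structure MPath (V : Type u) where
  k : ℕ
  Z : ℕ → V
  E : ℕ → EKind
  hk : 1 ≤ k

namespace MPath

variable {V : Type u}

/-- the path is a path of `G` -/
def valid (p : MPath V) (G : DMG V) : Prop :=
  ∀ i < p.k,
    (p.E i = EKind.fwd → G.D (p.Z i) (p.Z (i+1))) ∧
    (p.E i = EKind.bwd → G.D (p.Z (i+1)) (p.Z i)) ∧
    (p.E i = EKind.bi → G.B (p.Z i) (p.Z (i+1)))

/-- the step has an arrowhead at its second endpoint -/
def headAtSnd : EKind → Prop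
  | EKind.fwd => True
  | EKind.bi => True
  | EKind.bwd => False

/-- the step has an arrowhead at its first endpoint -/
def headAtFst : EKind → Prop
  | EKind.bwd => True
  | EKind.bi => True
  | EKind.fwd => False

/-- `Z i` is a collider on the path (meaningful for `1 ≤ i ≤ k-1`) -/
def collider (p : MPath V) (i : ℕ) : Prop :=
  headAtSnd (p.E (i-1)) ∧ headAtFst (p.E i)

end MPath

/-- the separation rule: `d`-separation or `σ`-separation -/
inductive SepRule | d | s

/-- the path between `x` and `y` is `r`-blocked by `S` in `G` -/
def MPath.blocked {V : Type u} (p : MPath V) (G : DMG V) (r : SepRule) (S : Set V)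
    (x y : V) : Prop :=
  ∃ i, 1 ≤ i ∧ i < p.k ∧
    ((p.collider i ∧ p.Z i ∉ G.ancSet (S ∪ {x, y})) ∨
     (¬ p.collider i ∧ p.Z i ∈ S ∧
       (r = SepRule.d ∨
        (p.E i = EKind.fwd ∧ p.Z (i+1) ∉ G.scc (p.Z i)) ∨
        (p.E (i-1) = EKind.bwd ∧ p.Z (i-1) ∉ G.scc (p.Z i)))))

/-- `S` `r`-separates `x` and `y` in `G` -/
def rSep {V : Type u} (G : DMG V) (r : SepRule) (S : Set V) (x y : V) : Prop :=
  ∀ p : MPath V, p.valid G → p.Z 0 = x → p.Z p.k = y → p.blocked G r S x y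

/-- the `r`-independence model of `G` -/
def IM {V : Type u} (G : DMG V) (r : SepRule) : Set (V × V × Set V) :=
  {t | t.1 ≠ t.2.1 ∧ t.1 ∉ t.2.2 ∧ t.2.1 ∉ t.2.2 ∧ rSep G r t.2.2 t.1 t.2.1}

/-- `G` and `H` are `𝓘`-`r`-Markov equivalent -/
def IMEquiv {V : Type u} (G H : DMG V) (r : SepRule) (𝓘 : Set (Set V)) : Prop :=
  ∀ I ∈ 𝓘, IM (G.intervene I) r = IM (H.intervene I) r

/-- a `d`-inducing path between `x` and `y`: every collider is an ancestor of `{x,y}` -/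
def MPath.dInducing {V : Type u} (p : MPath V) (G : DMG V) (x y : V) : Prop :=
  ∀ i, 1 ≤ i → i < p.k → p.collider i → p.Z i ∈ G.ancSet {x, y}

/-- a `σ`-inducing path between `x` and `y` -/
def MPath.sInducing {V : Type u} (p : MPath V) (G : DMG V) (x y : V) : Prop :=
  p.dInducing G x y ∧
  ∀ i, 1 ≤ i → i < p.k → ¬ p.collider i →
    (p.E (i-1) = EKind.bwd → p.Z (i-1) ∈ G.scc (p.Z i)) ∧
    (p.E i = EKind.fwd → p.Z (i+1) ∈ G.scc (p.Z i))

/-- an `r`-inducing path -/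
def MPath.rInducing {V : Type u} (p : MPath V) (G : DMG V) (r : SepRule) (x y : V) : Prop :=
  match r with
  | SepRule.d => p.dInducing G x y
  | SepRule.s => p.sInducing G x y

/-- colored separating system on `(V, C)` -/
def ColoredSepSystem {V : Type u} {γ : Type*} (C : V → γ) (𝓘 : Set (Set V)) : Prop :=
  ∀ X Y : V, C X ≠ C Y → ∃ I ∈ 𝓘, X ∈ I ∧ Y ∉ I

/-- non-adjacent separating system on `(V, D)` -/
def NonAdjSepSystem {V : Type u} (G : DMG V) (𝓘 : Set (Set V)) : Prop :=
  ∀ X Y : V, X ≠ Y → ¬ G.D X Y → ¬ G.D Y X →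
    ∃ I ∈ 𝓘, G.paSet {X, Y} ⊆ I ∧ X ∉ I ∧ Y ∉ I

/-- adjacent separating system on `(V, D)` -/
def AdjSepSystem {V : Type u} (G : DMG V) (𝓘 : Set (Set V)) : Prop :=
  ∀ X Y : V, G.D X Y → ¬ G.D Y X →
    (∃ I ∈ 𝓘, G.paSet {X, Y} \ {X, Y} ⊆ I ∧ X ∉ I ∧ Y ∉ I) ∧
    (∃ I' ∈ 𝓘, G.paSet {X, Y} \ {Y} ⊆ I' ∧ X ∈ I' ∧ Y ∉ I')

/-- the minimum edge clique cover number `cc(H)` -/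
noncomputable def ecc {V : Type u} (H : SimpleGraph V) : ℕ :=
  sInf {K | ∃ C : Fin K → Set V, (∀ k, H.IsClique (C k)) ∧
    ∀ x y : V, H.Adj x y → ∃ k, x ∈ C k ∧ y ∈ C k}

/-- two edges that must receive different colors in a strong edge coloring:
they are distinct and share an endpoint or are both incident to a common third edge -/
def StrongAdjE {V : Type u} (H : SimpleGraph V) (e₁ e₂ : Sym2 V) : Prop :=
  e₁ ≠ e₂ ∧ ((∃ v, v ∈ e₁ ∧ v ∈ e₂) ∨
    ∃ e₃ ∈ H.edgeSet, e₃ ≠ e₁ ∧ e₃ ≠ e₂ ∧ (∃ v, v ∈ e₁ ∧ v ∈ e₃) ∧ ∃ u, u ∈ e₂ ∧ u ∈ e₃)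

/-- the strong edge chromatic number `χ_s(H)` -/
noncomputable def strongChrom {V : Type u} (H : SimpleGraph V) : ℕ :=
  sInf {K | ∃ f : Sym2 V → Fin K, ∀ e₁ ∈ H.edgeSet, ∀ e₂ ∈ H.edgeSet,
    StrongAdjE H e₁ e₂ → f e₁ ≠ f e₂}

/-! Fix a strong edge colouring `f` of the skeleton with `χ_s(G^u)` colours and let `V_k` be the
set of vertices covered by edges of colour `k`. A colour class is an induced matching, so for a
strictly directed edge `X → Y` of colour `k`, no parent of `{X, Y}` other than `X`, `Y` lies in
`V_k`, and `X → Y` is the only colour-`k` edge at `X`. Hence `Pa(V_k) \ V_k` and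
`(Pa(V_k) ∪ tails_k) \ heads_k` are the two sets demanded for `(X, Y)`, giving `2 χ_s(G^u)` sets
in total. -/

namespace SimpleGraph

variable {V α : Type*} {H : SimpleGraph V} {f : Sym2 V → α}

def IsStrongEdgeColoring (H : SimpleGraph V) (f : Sym2 V → α) : Prop :=
  ∀ e₁ ∈ H.edgeSet, ∀ e₂ ∈ H.edgeSet, StrongAdjE H e₁ e₂ → f e₁ ≠ f e₂

theorem exists_isStrongEdgeColoring_fin_strongChrom [Finite V] (H : SimpleGraph V) :
    ∃ f : Sym2 V → Fin (strongChrom H), H.IsStrongEdgeColoring f := by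
  have := Fintype.ofFinite V
  exact Nat.sInf_mem (s := {K | ∃ f : Sym2 V → Fin K, H.IsStrongEdgeColoring f})
    ⟨_, Fintype.equivFin (Sym2 V), fun _ _ _ _ h hf => h.1 (Equiv.injective _ hf)⟩

theorem IsStrongEdgeColoring.eq_of_color_eq (hf : H.IsStrongEdgeColoring f) {e₁ e₂ : Sym2 V}
    (h₁ : e₁ ∈ H.edgeSet) (h₂ : e₂ ∈ H.edgeSet) (hc : f e₁ = f e₂) {x z : V} (hx : x ∈ e₁)
    (hz : z ∈ e₂) (hxz : x = z ∨ H.Adj x z) : e₁ = e₂ := by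
  by_contra hne
  refine hf _ h₁ _ h₂ ⟨hne, ?_⟩ hc
  rcases hxz with rfl | hxz
  · exact Or.inl ⟨x, hx, hz⟩
  by_cases h₁ : s(x, z) = e₁
  · exact Or.inl ⟨z, h₁ ▸ Sym2.mem_mk_right x z, hz⟩
  by_cases h₂ : s(x, z) = e₂
  · exact Or.inl ⟨x, hx, h₂ ▸ Sym2.mem_mk_left x z⟩
  exact Or.inr ⟨s(x, z), hxz, h₁, h₂, ⟨x, hx, Sym2.mem_mk_left x z⟩,
    ⟨z, hz, Sym2.mem_mk_right x z⟩⟩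

end SimpleGraph

namespace DMG

variable {V α : Type*} (G : DMG V)

theorem paSet_mono {s t : Set V} (h : s ⊆ t) : G.paSet s ⊆ G.paSet t :=
  fun _ ⟨x, hx, hD⟩ => ⟨x, h hx, hD⟩

theorem skel_adj_of_D {x y : V} (h : G.D x y) : G.skel.Adj x y :=
  ⟨fun e => G.D_irrefl x (e ▸ h), Or.inl h⟩

variable (f : Sym2 V → α)

def colorSupport (k : α) : Set V := {v | ∃ w, G.skel.Adj v w ∧ f s(v, w) = k}

def colorHeads (k : α) : Set V := {y | ∃ x, G.D x y ∧ ¬ G.D y x ∧ f s(x, y) = k}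

def colorTails (k : α) : Set V := {x | ∃ y, G.D x y ∧ ¬ G.D y x ∧ f s(x, y) = k}

def parentsOffColor (k : α) : Set V := G.paSet (G.colorSupport f k) \ G.colorSupport f k

def parentsTailsOffHeads (k : α) : Set V :=
  (G.paSet (G.colorSupport f k) ∪ G.colorTails f k) \ G.colorHeads f k

variable {G f}

theorem pair_subset_colorSupport {x y : V} (h : G.skel.Adj x y) :
    {x, y} ⊆ G.colorSupport f (f s(x, y)) := by
  rintro v (rfl | rfl)
  · exact ⟨y, h, rfl⟩
  · exact ⟨x, h.symm, Sym2.eq_swap ▸ rfl⟩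

theorem colorHeads_subset_colorSupport (k : α) : G.colorHeads f k ⊆ G.colorSupport f k :=
  fun _ ⟨x, hD, _, hc⟩ => ⟨x, (G.skel_adj_of_D hD).symm, Sym2.eq_swap ▸ hc⟩

theorem notMem_colorSupport_of_mem_paSet (hf : G.skel.IsStrongEdgeColoring f) {X Y Z : V}
    (hXY : G.skel.Adj X Y) (hZ : Z ∈ G.paSet {X, Y}) (hZX : Z ≠ X) (hZY : Z ≠ Y) :
    Z ∉ G.colorSupport f (f s(X, Y)) := by
  rintro ⟨W, hZW, hc⟩
  obtain ⟨x, hx, hDZx⟩ := hZ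
  have hx' : x ∈ s(X, Y) := by rcases hx with rfl | rfl <;> simp
  have hZ : Z ∈ s(X, Y) := hf.eq_of_color_eq hZW hXY hc (Sym2.mem_mk_left Z W) hx'
    (Or.inr (G.skel_adj_of_D hDZx)) ▸ Sym2.mem_mk_left Z W
  rcases Sym2.mem_iff.mp hZ with h | h <;> contradiction

theorem notMem_colorHeads_of_mem_paSet (hf : G.skel.IsStrongEdgeColoring f) {X Y Z : V}
    (hXY : G.D X Y) (hYX : ¬ G.D Y X) (hZ : Z ∈ G.paSet {X, Y}) (hZY : Z ≠ Y) :
    Z ∉ G.colorHeads f (f s(X, Y)) := by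
  intro hZh
  rcases eq_or_ne Z X with rfl | hZX
  · obtain ⟨W, hWZ, -, hc⟩ := hZh
    have hW := hf.eq_of_color_eq (G.skel_adj_of_D hWZ) (G.skel_adj_of_D hXY) hc
      (Sym2.mem_mk_right W Z) (Sym2.mem_mk_left Z Y) (Or.inl rfl)
    rcases Sym2.eq_iff.mp hW with ⟨rfl, -⟩ | ⟨rfl, -⟩
    · exact G.D_irrefl _ hWZ
    · exact hYX hWZ
  · exact notMem_colorSupport_of_mem_paSet hf (G.skel_adj_of_D hXY) hZ hZX hZY
      (colorHeads_subset_colorSupport _ hZh)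

theorem adjSepSystem_parentsOffColor_parentsTailsOffHeads
    (hf : G.skel.IsStrongEdgeColoring f) :
    AdjSepSystem G (Set.range (G.parentsOffColor f) ∪ Set.range (G.parentsTailsOffHeads f)) := by
  intro X Y hXY hYX
  have hadj := G.skel_adj_of_D hXY
  have hsupp := pair_subset_colorSupport (f := f) hadj
  have hpa : G.paSet {X, Y} ⊆ G.paSet (G.colorSupport f (f s(X, Y))) := G.paSet_mono hsupp
  refine ⟨⟨_, .inl ⟨f s(X, Y), rfl⟩, ?_, fun h => h.2 (hsupp (.inl rfl)),
      fun h => h.2 (hsupp (.inr rfl))⟩,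
    ⟨_, .inr ⟨f s(X, Y), rfl⟩, ?_, ⟨.inr ⟨Y, hXY, hYX, rfl⟩, ?_⟩,
      fun h => h.2 ⟨X, hXY, hYX, rfl⟩⟩⟩
  · rintro Z ⟨hZ, hZXY⟩
    exact ⟨hpa hZ, notMem_colorSupport_of_mem_paSet hf hadj hZ (fun h => hZXY (.inl h))
      (fun h => hZXY (.inr h))⟩
  · rintro Z ⟨hZ, hZY⟩
    exact ⟨.inl (hpa hZ), notMem_colorHeads_of_mem_paSet hf hXY hYX hZ hZY⟩
  · exact notMem_colorHeads_of_mem_paSet hf hXY hYX ⟨Y, .inr rfl, hXY⟩ hadj.ne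

end DMG

theorem Set.ncard_range_le {ι β : Type*} [Finite ι] (g : ι → β) :
    (Set.range g).ncard ≤ Nat.card ι :=
  (Nat.card_coe_set_eq _).symm.trans_le (Finite.card_range_le g)

/-- there is an adjacent separating system on `(V, D)` with at most
`2·χ_s(G^u)` elements. -/
theorem adj_separating_system_le_strongChrom {V : Type u} [Fintype V] (G : DMG V) :
    ∃ 𝓘 : Set (Set V), 𝓘.Finite ∧ AdjSepSystem G 𝓘 ∧
      𝓘.ncard ≤ 2 * strongChrom G.skel := by
  obtain ⟨f, hf⟩ := G.skel.exists_isStrongEdgeColoring_fin_strongChrom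
  refine ⟨_, (Set.finite_range _).union (Set.finite_range _),
    G.adjSepSystem_parentsOffColor_parentsTailsOffHeads hf, ?_⟩
  calc _ ≤ (Set.range (G.parentsOffColor f)).ncard
          + (Set.range (G.parentsTailsOffHeads f)).ncard := Set.ncard_union_le _ _
    _ ≤ strongChrom G.skel + strongChrom G.skel := by
        simpa using add_le_add (Set.ncard_range_le (G.parentsOffColor f))
          (Set.ncard_range_le (G.parentsTailsOffHeads f))
    _ = 2 * strongChrom G.skel := (two_mul _).symm
end

section
/- Let V be a finite set with |V| = n ≥ 2, let r ∈ {d, σ}, and let c be an integer with 1 ≤ c ≤ n − 1. Then there exists a DMG G = (V, D, B) with cc(G^{uc}) = c such that for every collection 𝓘 of subsets of V with |𝓘| < c, there exists a DMG G' over V that is 𝓘-r-Markov equivalent to G and satisfies RA(G') ≠ RA(G). -/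
universe u

/-!
Let `G` have a centre `v` and `c` leaves `L`, with directed 2-cycles between all pairs except
the star edges `{v, l}` and bidirected edges between all pairs. Then `G^{uc}` is the star
`K_{1,c}`, whose edge clique cover number is `c`, and the non-adjacent bidirected edges are the
star edges. An experiment `I` can single out at most one leaf (as the only leaf outside `I`), so
fewer than `c` experiments miss some leaf `i`, and deleting `v ↔ i` is then invisible: an
experiment that intervenes on `v` or `i` deletes that edge anyway, and any other one leaves a
second leaf `j` untouched, and every open path using `v ↔ i` can be rerouted as `v ↔ j ↔ i` or
`v ↔ j → i`.
-/

namespace DMG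

variable {V : Type u}

theorem ext {G H : DMG V} (hD : G.D = H.D) (hB : G.B = H.B) : G = H := by
  cases G; cases H; subst hD hB; rfl

theorem removeBi_intervene (G : DMG V) (a b : V) (I : Set V) :
    (G.removeBi a b).intervene I = (G.intervene I).removeBi a b :=
  ext rfl (by funext x y; exact propext and_right_comm)

theorem removeBi_of_not_B {G : DMG V} {a b : V} (h : ¬ G.B a b) : G.removeBi a b = G := by
  refine ext rfl (funext₂ fun x y => propext ⟨And.left, fun hxy => ⟨hxy, ?_⟩⟩)
  rintro (⟨rfl, rfl⟩ | ⟨rfl, rfl⟩)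
  exacts [h hxy, h (G.B_symm _ _ hxy)]

theorem BN_removeBi_ne {G : DMG V} {a b : V} (h : G.BN a b) : (G.removeBi a b).BN ≠ G.BN :=
  fun heq => (congrFun₂ heq a b ▸ h).1.2 (Or.inl ⟨rfl, rfl⟩)

def Joins (G : DMG V) (e : EKind) (u w : V) : Prop :=
  (e = EKind.fwd → G.D u w) ∧ (e = EKind.bwd → G.D w u) ∧ (e = EKind.bi → G.B u w)

end DMG

namespace MPath

variable {V : Type u}

theorem valid_iff (p : MPath V) (G : DMG V) :
    p.valid G ↔ ∀ i < p.k, G.Joins (p.E i) (p.Z i) (p.Z (i + 1)) := Iff.rfl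

def Blocks (G : DMG V) (r : SepRule) (S : Set V) (x y : V) (eIn eOut : EKind)
    (zPrev z zNext : V) : Prop :=
  ((headAtSnd eIn ∧ headAtFst eOut) ∧ z ∉ G.ancSet (S ∪ {x, y})) ∨
    (¬ (headAtSnd eIn ∧ headAtFst eOut) ∧ z ∈ S ∧
      (r = SepRule.d ∨ (eOut = EKind.fwd ∧ zNext ∉ G.scc z) ∨
        (eIn = EKind.bwd ∧ zPrev ∉ G.scc z)))

theorem blocked_iff (p : MPath V) (G : DMG V) (r : SepRule) (S : Set V) (x y : V) :
    p.blocked G r S x y ↔ ∃ i, 1 ≤ i ∧ i < p.k ∧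
      Blocks G r S x y (p.E (i - 1)) (p.E i) (p.Z (i - 1)) (p.Z i) (p.Z (i + 1)) := Iff.rfl

section Blocks

variable {G : DMG V} {r : SepRule} {S : Set V} {x y z zPrev zPrev' zNext zNext' : V}
  {e e' eIn eOut : EKind}

theorem blocks_congr_out (he : headAtFst e) (he' : headAtFst e') :
    Blocks G r S x y eIn e zPrev z zNext ↔ Blocks G r S x y eIn e' zPrev z zNext' := by
  cases e <;> cases e' <;> simp_all [Blocks, headAtFst]

theorem blocks_congr_in (he : headAtSnd e) (he' : headAtSnd e') :
    Blocks G r S x y e eOut zPrev z zNext ↔ Blocks G r S x y e' eOut zPrev' z zNext := by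
  cases e <;> cases e' <;> simp_all [Blocks, headAtSnd]

end Blocks

/-- Replace step `t` of `p` by a step of kind `e₁` into the new vertex `m`, followed by a step of
kind `e₂` out of it. -/
def splice (p : MPath V) (t : ℕ) (m : V) (e₁ e₂ : EKind) : MPath V where
  k := p.k + 1
  Z s := if s ≤ t then p.Z s else if s = t + 1 then m else p.Z (s - 1)
  E s := if s < t then p.E s else if s = t then e₁ else if s = t + 1 then e₂ else p.E (s - 1)
  hk := Nat.le_succ_of_le p.hk

section splice

variable {p : MPath V} {t s : ℕ} {m : V} {e₁ e₂ : EKind}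

theorem splice_Z_of_le (h : s ≤ t) : (p.splice t m e₁ e₂).Z s = p.Z s := if_pos h

theorem splice_Z_succ : (p.splice t m e₁ e₂).Z (t + 1) = m := by simp [splice]

theorem splice_Z_of_lt (h : t + 1 < s) : (p.splice t m e₁ e₂).Z s = p.Z (s - 1) := by
  simp [splice, show ¬ s ≤ t by omega, show s ≠ t + 1 by omega]

theorem splice_E_of_lt (h : s < t) : (p.splice t m e₁ e₂).E s = p.E s := if_pos h

theorem splice_E_self : (p.splice t m e₁ e₂).E t = e₁ := by simp [splice]

theorem splice_E_succ : (p.splice t m e₁ e₂).E (t + 1) = e₂ := by simp [splice]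

theorem splice_E_of_gt (h : t + 1 < s) : (p.splice t m e₁ e₂).E s = p.E (s - 1) := by
  simp [splice, show ¬ s < t by omega, show s ≠ t by omega, show s ≠ t + 1 by omega]

theorem splice_Z_zero : (p.splice t m e₁ e₂).Z 0 = p.Z 0 := splice_Z_of_le t.zero_le

theorem splice_Z_k (ht : t < p.k) : (p.splice t m e₁ e₂).Z (p.splice t m e₁ e₂).k = p.Z p.k :=
  splice_Z_of_lt (by simp [splice]; omega)

theorem splice_valid {G : DMG V} (hv : p.valid G) (ht : t < p.k) (h₁ : G.Joins e₁ (p.Z t) m)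
    (h₂ : G.Joins e₂ m (p.Z (t + 1))) : (p.splice t m e₁ e₂).valid G := by
  intro s hs
  change s < p.k + 1 at hs
  obtain h | rfl | rfl | h : s < t ∨ s = t ∨ s = t + 1 ∨ t + 1 < s := by omega
  · rw [splice_E_of_lt h, splice_Z_of_le h.le, splice_Z_of_le h]
    exact hv s (by omega)
  · rwa [splice_E_self, splice_Z_of_le le_rfl, splice_Z_succ]
  · rwa [splice_E_succ, splice_Z_succ, splice_Z_of_lt (by omega)]
  · rw [splice_E_of_gt h, splice_Z_of_lt h, splice_Z_of_lt (by omega),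
      show s + 1 - 1 = s - 1 + 1 by omega]
    exact hv (s - 1) (by omega)

/-- Splicing a vertex into a bidirected step keeps the arrowheads at both old endpoints, so if
the new vertex does not block, neither does any other vertex. -/
theorem splice_not_blocked {G : DMG V} {r : SepRule} {S : Set V} {x y : V}
    (hnb : ¬ p.blocked G r S x y) (ht : t < p.k) (hE : p.E t = EKind.bi)
    (h₁ : headAtFst e₁) (h₂ : headAtSnd e₂)
    (hm : ¬ Blocks G r S x y e₁ e₂ (p.Z t) m (p.Z (t + 1))) :
    ¬ (p.splice t m e₁ e₂).blocked G r S x y := by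
  rw [blocked_iff]
  rintro ⟨s, hs1, hs2, hb⟩
  change s < p.k + 1 at hs2
  apply hnb
  rw [blocked_iff]
  obtain h | rfl | rfl | rfl | h :
      s < t ∨ s = t ∨ s = t + 1 ∨ s = t + 2 ∨ t + 2 < s := by omega
  · refine ⟨s, hs1, by omega, ?_⟩
    rwa [splice_E_of_lt (by omega), splice_E_of_lt h, splice_Z_of_le (by omega),
      splice_Z_of_le h.le, splice_Z_of_le h] at hb
  · refine ⟨s, hs1, ht, ?_⟩
    rw [splice_E_of_lt (by omega), splice_E_self, splice_Z_of_le (by omega),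
      splice_Z_of_le le_rfl, splice_Z_succ] at hb
    exact (blocks_congr_out h₁ (by rw [hE]; trivial)).1 hb
  · rw [Nat.add_sub_cancel, splice_E_self, splice_E_succ, splice_Z_of_le le_rfl,
      splice_Z_succ, splice_Z_of_lt (by omega)] at hb
    exact absurd hb hm
  · refine ⟨t + 1, by omega, by omega, ?_⟩
    rw [show t + 2 - 1 = t + 1 by omega, splice_E_succ, splice_E_of_gt (by omega), splice_Z_succ,
      splice_Z_of_lt (by omega), splice_Z_of_lt (by omega)] at hb
    exact (blocks_congr_in h₂ (by rw [Nat.add_sub_cancel, hE]; trivial)).1 hb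
  · refine ⟨s - 1, by omega, by omega, ?_⟩
    rwa [splice_E_of_gt (by omega), splice_E_of_gt (by omega), splice_Z_of_lt (by omega),
      splice_Z_of_lt (by omega), splice_Z_of_lt (by omega),
      show s + 1 - 1 = s - 1 + 1 by omega] at hb

end splice

def UsesBi (p : MPath V) (a b : V) (t : ℕ) : Prop :=
  p.E t = EKind.bi ∧ s(p.Z t, p.Z (t + 1)) = s(a, b)

theorem valid_removeBi_iff {p : MPath V} {G : DMG V} {a b : V} :
    p.valid (G.removeBi a b) ↔ p.valid G ∧ ∀ t < p.k, ¬ p.UsesBi a b t := by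
  simp only [valid_iff, DMG.Joins, UsesBi, Sym2.eq_iff]
  constructor
  · intro h
    exact ⟨fun t ht => ⟨(h t ht).1, (h t ht).2.1, fun he => ((h t ht).2.2 he).1⟩,
      fun t ht hu => ((h t ht).2.2 hu.1).2 hu.2⟩
  · rintro ⟨h, hbi⟩ t ht
    exact ⟨(h t ht).1, (h t ht).2.1, fun he => ⟨(h t ht).2.2 he, fun hab => hbi t ht ⟨he, hab⟩⟩⟩

theorem usesBi_splice {p : MPath V} {a b m : V} {t s : ℕ} {e₁ e₂ : EKind}
    (hma : m ≠ a) (hmb : m ≠ b) (h : (p.splice t m e₁ e₂).UsesBi a b s) :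
    (s < t ∧ p.UsesBi a b s) ∨ (t + 1 < s ∧ p.UsesBi a b (s - 1)) := by
  have hm : ∀ z, s(z, m) ≠ s(a, b) ∧ s(m, z) ≠ s(a, b) := fun z => by
    simp only [ne_eq, Sym2.eq_iff]; tauto
  obtain hs | rfl | rfl | hs : s < t ∨ s = t ∨ s = t + 1 ∨ t + 1 < s := by omega
  · rw [UsesBi, splice_E_of_lt hs, splice_Z_of_le hs.le, splice_Z_of_le hs] at h
    exact Or.inl ⟨hs, h⟩
  · rw [UsesBi, splice_Z_succ] at h
    exact absurd h.2 (hm _).1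
  · rw [UsesBi, splice_Z_succ] at h
    exact absurd h.2 (hm _).2
  · rw [UsesBi, splice_E_of_gt hs, splice_Z_of_lt hs, splice_Z_of_lt (by omega),
      show s + 1 - 1 = s - 1 + 1 by omega] at h
    exact Or.inr ⟨hs, h⟩

end MPath

namespace DMG

open MPath

variable {V : Type u} {H : DMG V} {a b m : V} {r : SepRule} {S : Set V} {x y : V}

/-- A bidirected step `a ↔ b` of an open path can be rerouted through `m`: as `a ↔ m ↔ b` when
the collider `m` is an ancestor of `S ∪ {x, y}`, and otherwise (then `m ∉ S`) as `a ↔ m → b`. -/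
theorem exists_splice_open (hma : H.B a m) (hmb : H.B m b) (hD : H.D m b) {p : MPath V}
    (hv : p.valid H) (hnb : ¬ p.blocked H r S x y) {t : ℕ} (ht : t < p.k)
    (hu : p.UsesBi a b t) :
    ∃ e₁ e₂, (p.splice t m e₁ e₂).valid H ∧ ¬ (p.splice t m e₁ e₂).blocked H r S x y := by
  obtain ⟨hE, hab⟩ := hu
  have hbm := H.B_symm _ _ hmb
  have hma' := H.B_symm _ _ hma
  by_cases hanc : m ∈ H.ancSet (S ∪ {x, y})
  · have hB : H.B (p.Z t) m ∧ H.B m (p.Z (t + 1)) := by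
      rcases Sym2.eq_iff.1 hab with ⟨h₀, h₁⟩ | ⟨h₀, h₁⟩ <;> rw [h₀, h₁] <;> exact ⟨‹_›, ‹_›⟩
    refine ⟨EKind.bi, EKind.bi, splice_valid hv ht ?_ ?_,
      splice_not_blocked hnb ht hE trivial trivial ?_⟩
    · exact ⟨nofun, nofun, fun _ => hB.1⟩
    · exact ⟨nofun, nofun, fun _ => hB.2⟩
    · rintro (⟨-, hm⟩ | ⟨hcol, -⟩)
      exacts [hm hanc, hcol ⟨trivial, trivial⟩]
  have hmS : m ∉ S := fun hm => hanc ⟨m, Or.inl hm, Relation.ReflTransGen.refl⟩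
  rcases Sym2.eq_iff.1 hab with ⟨h₀, h₁⟩ | ⟨h₀, h₁⟩
  · refine ⟨EKind.bi, EKind.fwd, splice_valid hv ht ?_ ?_,
      splice_not_blocked hnb ht hE trivial trivial ?_⟩
    · exact ⟨nofun, nofun, fun _ => h₀ ▸ hma⟩
    · exact ⟨fun _ => h₁ ▸ hD, nofun, nofun⟩
    · rintro (⟨⟨-, hcol⟩, -⟩ | ⟨-, hm, -⟩)
      exacts [hcol, hmS hm]
  · refine ⟨EKind.bwd, EKind.bi, splice_valid hv ht ?_ ?_,
      splice_not_blocked hnb ht hE trivial trivial ?_⟩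
    · exact ⟨nofun, fun _ => h₀ ▸ hD, nofun⟩
    · exact ⟨nofun, nofun, fun _ => h₁ ▸ hma'⟩
    · rintro (⟨⟨hcol, -⟩, -⟩ | ⟨-, hm, -⟩)
      exacts [hcol, hmS hm]

/-- Induction on a bound `n` for the positions of the steps using `a ↔ b`: rerouting the last
one leaves the earlier ones where they are. -/
theorem exists_open_path_removeBi (hma : H.B a m) (hmb : H.B m b) (hD : H.D m b) (n : ℕ) :
    ∀ p : MPath V, p.valid H → ¬ p.blocked H r S x y → (∀ t < p.k, p.UsesBi a b t → t < n) →
      ∃ q : MPath V, q.valid (H.removeBi a b) ∧ q.Z 0 = p.Z 0 ∧ q.Z q.k = p.Z p.k ∧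
        ¬ q.blocked H r S x y := by
  have hne_a : m ≠ a := fun h => H.B_irrefl a (h ▸ hma)
  have hne_b : m ≠ b := fun h => H.D_irrefl m (h ▸ hD)
  induction n with
  | zero =>
    intro p hv hnb hbi
    exact ⟨p, valid_removeBi_iff.2 ⟨hv, fun t ht hu => absurd (hbi t ht hu) t.not_lt_zero⟩,
      rfl, rfl, hnb⟩
  | succ n ih =>
    intro p hv hnb hbi
    by_cases hn : n < p.k ∧ p.UsesBi a b n
    · obtain ⟨e₁, e₂, hqv, hqnb⟩ := exists_splice_open hma hmb hD hv hnb hn.1 hn.2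
      obtain ⟨q, hq⟩ := ih _ hqv hqnb fun s hs hu => by
        rcases usesBi_splice hne_a hne_b hu with ⟨hs', -⟩ | ⟨hs', hu'⟩
        · exact hs'
        · have := hbi (s - 1) (by change s < p.k + 1 at hs; omega) hu'
          omega
      exact ⟨q, hq.1, hq.2.1.trans splice_Z_zero, hq.2.2.1.trans (splice_Z_k hn.1), hq.2.2.2⟩
    · refine ih p hv hnb fun t ht hu => ?_
      have := hbi t ht hu
      rcases (Nat.lt_succ_iff.1 this).lt_or_eq with h | rfl
      exacts [h, absurd ⟨ht, hu⟩ hn]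

theorem rSep_removeBi_iff (hma : H.B a m) (hmb : H.B m b) (hD : H.D m b) :
    rSep (H.removeBi a b) r S x y ↔ rSep H r S x y := by
  constructor
  · intro h p hv h₀ hk
    by_contra hnb
    obtain ⟨q, hqv, hq₀, hqk, hqnb⟩ :=
      exists_open_path_removeBi hma hmb hD p.k p hv hnb fun t ht _ => ht
    exact hqnb (h q hqv (hq₀.trans h₀) (hqk.trans hk))
  · exact fun h p hv => h p (valid_removeBi_iff.1 hv).1

theorem IM_removeBi (hma : H.B a m) (hmb : H.B m b) (hD : H.D m b) (r : SepRule) :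
    IM (H.removeBi a b) r = IM H r := by
  ext ⟨x, y, S⟩
  simp only [IM, Set.mem_ofPred_eq, rSep_removeBi_iff hma hmb hD]

end DMG

def IsStarEdge {V : Type u} (v : V) (L : Finset V) (a b : V) : Prop :=
  (a = v ∧ b ∈ L) ∨ (b = v ∧ a ∈ L)

theorem ecc_eq_card_of_adj_iff_isStarEdge {V : Type u} {H : SimpleGraph V} {v : V}
    {L : Finset V} (hv : v ∉ L) (hH : ∀ a b, H.Adj a b ↔ IsStarEdge v L a b) :
    ecc H = L.card := by
  have hcover : L.card ∈ {K | ∃ C : Fin K → Set V, (∀ k, H.IsClique (C k)) ∧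
      ∀ x y : V, H.Adj x y → ∃ k, x ∈ C k ∧ y ∈ C k} := by
    refine ⟨fun k => {v, (L.equivFin.symm k : V)}, fun k => ?_, fun x y hxy => ?_⟩
    · exact SimpleGraph.isClique_pair.2 fun _ => (hH _ _).2 (Or.inl ⟨rfl, Finset.coe_mem _⟩)
    · rcases (hH x y).1 hxy with ⟨rfl, hy⟩ | ⟨rfl, hx⟩
      · exact ⟨L.equivFin ⟨y, hy⟩, by simp, by simp⟩
      · exact ⟨L.equivFin ⟨x, hx⟩, by simp, by simp⟩
  refine le_antisymm (Nat.sInf_le hcover) (le_csInf ⟨_, hcover⟩ ?_)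
  rintro K ⟨C, hclique, hcov⟩
  choose f _ hfl using fun l : L => hcov v l ((hH v l).2 (Or.inl ⟨rfl, l.2⟩))
  have hinj : Function.Injective f := fun l l' hll' => by
    by_contra hne
    rcases (hH l l').1 (hclique (f l) (hfl l) (hll' ▸ hfl l') (Subtype.coe_ne_coe.2 hne))
      with ⟨h, -⟩ | ⟨h, -⟩
    exacts [hv (h ▸ l.2), hv (h ▸ l'.2)]
  simpa using Fintype.card_le_of_injective f hinj

theorem exists_mem_forall_exists_ne_not_mem {α : Type*} {L : Finset α} {𝓘 : Set (Set α)}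
    (h𝓘 : 𝓘.Finite) (hcard : 𝓘.ncard < L.card) :
    ∃ i ∈ L, ∀ I ∈ 𝓘, i ∉ I → ∃ j ∈ L, j ≠ i ∧ j ∉ I := by
  by_contra! h
  choose! F hF𝓘 hiF hF using h
  have hinj : Set.InjOn F L := fun i hi i' hi' hii' => by
    by_contra hne
    exact hiF i' hi' (hii' ▸ hF i hi i' hi' (Ne.symm hne))
  have := Set.ncard_le_ncard_of_injOn F hF𝓘 hinj h𝓘
  rw [Set.ncard_coe_finset] at this
  omega

namespace DMG

variable {V : Type u}

def star (v : V) (L : Finset V) : DMG V where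
  D a b := a ≠ b ∧ ¬ IsStarEdge v L a b
  B a b := a ≠ b
  D_irrefl _ h := h.1 rfl
  B_symm _ _ h := h.symm
  B_irrefl _ h := h rfl

variable {v i : V} {L : Finset V}

theorem ucomp_star_adj (hv : v ∉ L) (a b : V) :
    (star v L).ucomp.Adj a b ↔ IsStarEdge v L a b := by
  have hne : IsStarEdge v L a b → a ≠ b := by
    rintro (⟨rfl, hb⟩ | ⟨rfl, ha⟩) rfl <;> contradiction
  simp only [ucomp, star, IsStarEdge] at hne ⊢
  constructor
  · rintro ⟨hab, h₁, -⟩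
    by_contra h
    exact h₁ ⟨hab, h⟩
  · intro h
    exact ⟨hne h, fun h' => h'.2 h, fun h' => h'.2 (by tauto)⟩

theorem BN_star (hv : v ∉ L) (hi : i ∈ L) : (star v L).BN v i :=
  ⟨fun h => hv (h ▸ hi), fun h => h.2 (Or.inl ⟨rfl, hi⟩), fun h => h.2 (Or.inr ⟨rfl, hi⟩)⟩

theorem IM_intervene_star_removeBi (hv : v ∉ L) (hi : i ∈ L) {I : Set V}
    (hI : i ∉ I → ∃ j ∈ L, j ≠ i ∧ j ∉ I) (r : SepRule) :
    IM ((star v L).intervene I) r = IM (((star v L).removeBi v i).intervene I) r := by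
  rw [removeBi_intervene]
  by_cases hvi : v ∈ I ∨ i ∈ I
  · rw [removeBi_of_not_B]
    rintro ⟨-, hvI, hiI⟩
    exact hvi.elim hvI hiI
  obtain ⟨hvI, hiI⟩ := not_or.1 hvi
  obtain ⟨j, hj, hji, hjI⟩ := hI hiI
  have hvj : v ≠ j := fun h => hv (h ▸ hj)
  refine (IM_removeBi (H := (star v L).intervene I) (m := j) ⟨hvj, hvI, hjI⟩ ⟨hji, hjI, hiI⟩
    ⟨⟨hji, ?_⟩, hiI⟩ r).symm
  rintro (⟨rfl, -⟩ | ⟨rfl, -⟩)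
  exacts [hv hj, hv hi]

end DMG

theorem lower_bound_bidirected_num_experiments_general {V : Type u} [Fintype V] (r : SepRule)
    (n c : ℕ) (hn : Fintype.card V = n) (hn2 : 2 ≤ n) (hc2 : c ≤ n - 1) :
    ∃ G : DMG V, ecc G.ucomp = c ∧
      ∀ 𝓘 : Set (Set V), 𝓘.Finite → 𝓘.ncard < c →
        ∃ G' : DMG V, IMEquiv G G' r 𝓘 ∧ (G'.D ≠ G.D ∨ G'.BN ≠ G.BN) := by
  classical
  obtain ⟨v⟩ : Nonempty V := Fintype.card_pos_iff.1 (by omega)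
  obtain ⟨L, hLv, rfl⟩ : ∃ L ⊆ Finset.univ.erase v, L.card = c := Finset.exists_subset_card_eq
    (by rw [Finset.card_erase_of_mem (Finset.mem_univ v), Finset.card_univ]; omega)
  have hv : v ∉ L := fun h => by simpa using hLv h
  refine ⟨DMG.star v L, ecc_eq_card_of_adj_iff_isStarEdge hv (DMG.ucomp_star_adj hv),
    fun 𝓘 h𝓘 hcard => ?_⟩
  obtain ⟨i, hi, hI⟩ := exists_mem_forall_exists_ne_not_mem h𝓘 hcard
  exact ⟨_, fun I hI' => DMG.IM_intervene_star_removeBi hv hi (hI I hI') r,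
    Or.inr (DMG.BN_removeBi_ne (DMG.BN_star hv hi))⟩

/-- worst-case lower bound on the number of experiments needed to
identify the non-adjacent bidirected edges of a DMG. -/
theorem lower_bound_bidirected_num_experiments {V : Type u} [Fintype V] (r : SepRule)
    (n c : ℕ) (hn : Fintype.card V = n) (hn2 : 2 ≤ n) (hc1 : 1 ≤ c) (hc2 : c ≤ n - 1) :
    ∃ G : DMG V, ecc G.ucomp = c ∧
      ∀ 𝓘 : Set (Set V), 𝓘.Finite → 𝓘.ncard < c →
        ∃ G' : DMG V, IMEquiv G G' r 𝓘 ∧ (G'.D ≠ G.D ∨ G'.BN ≠ G.BN) :=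
  lower_bound_bidirected_num_experiments_general r n c hn hn2 hc2
end
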